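/- arXiv:2604.13507 — 2 statements merged into one kernel-verified Lean document; each statement's English description precedes it below -/
import Mathlib

section
/- Update invariance of min-plus services: let ψ = ψ^M for a cumulative matrix M and backlog b; suppose a tasks arrive and d are served with q := a+b, p := sup_{x∈U|q} ψ_1(x), and q ≥ d ≥ p. Define ṁ_{0j} := (min{m_{0,j+1}, q + m_{1,j+1}} ∸ d) and ṁ_{ij} := m_{i+1,j+1} for i>0. Then Ṁ is a cumulative matrix and for all x̊ ∈ U↑(q−d), the updated service ψ̇(x̊) := R^{-1}(ψ(x) ∸ dδ) (where x ∈ U|q corresponds to x̊ via x_{j+1} = x̊_j + d for j>0, x_1 = q) equals x̊ ⊗ Ṁ, i.e., ψ̇_j(x̊) = min_i(x̊_i + ṁ_{ij}). -/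
/-- A cumulative vector: a nondecreasing sequence `ℕ → ℕ∞` starting at `0`. -/
def Cumulative (x : ℕ → ℕ∞) : Prop := x 0 = 0 ∧ Monotone x

/-- `U↑b`: cumulative vectors whose first entry is at least `b`. -/
def UUp (b : ℕ) : Set (ℕ → ℕ∞) := {x | Cumulative x ∧ (b : ℕ∞) ≤ x 1}

/-- `U|q`: cumulative vectors whose first entry is exactly `q`. -/
def UAt (q : ℕ) : Set (ℕ → ℕ∞) := {x | Cumulative x ∧ x 1 = (q : ℕ∞)}

/-- A cumulative matrix: strictly upper triangular with nondecreasing rows. -/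
def CumulativeMatrix (m : ℕ → ℕ → ℕ∞) : Prop :=
  (∀ i j, j ≤ i → m i j = 0) ∧ (∀ i j, m i j ≤ m i (j + 1))

/-- The min-plus service `ψ^M_j(x) = min_i (x_i + m_{ij})`. -/
noncomputable def minPlus (m : ℕ → ℕ → ℕ∞) (x : ℕ → ℕ∞) (j : ℕ) : ℕ∞ :=
  ⨅ i : ℕ, (x i + m i j)

/-- The arrival vector `x ∈ U|q` corresponding to the next-slot vector `x̊`:
`x_0 = 0`, `x_1 = q`, and `x_{j+1} = x̊_j + d` for `j ≥ 1`. -/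
def liftArr (q d : ℕ) (x' : ℕ → ℕ∞) : ℕ → ℕ∞ := fun k =>
  if k = 0 then 0 else if k = 1 then (q : ℕ∞) else x' (k - 1) + (d : ℕ∞)

/-- The updated cumulative matrix `Ṁ`. -/
noncomputable def updMat (q d : ℕ) (m : ℕ → ℕ → ℕ∞) (i j : ℕ) : ℕ∞ :=
  if i = 0 then min (m 0 (j + 1)) ((q : ℕ∞) + m 1 (j + 1)) - (d : ℕ∞)
  else m (i + 1) (j + 1)

/-!
Truncated subtraction of `d` commutes with `min` and, since infima in `ℕ∞` are attained, with
infima. So in `ψ_{j+1}(x) ∸ d` the terms `i = 0, 1` merge into `ṁ_{0j}`, while for `i ≥ 2` the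
shift `x_i = x̊_{i-1} + d` cancels against `d`. Cumulativity of `Ṁ` comes down to `ṁ_{00} = 0`,
i.e. `min (m_{01}, q) ≤ d`, which follows from `p ≤ d` by evaluating `ψ_1` at the step vector
`(0, q, q, …) ∈ U|q`.
-/

theorem Monotone.map_iInf_of_wellFoundedLT {α β ι : Type*} [CompleteLinearOrder α]
    [WellFoundedLT α] [CompleteLattice β] [Nonempty ι] {g : α → β} (hg : Monotone g)
    (f : ι → α) : g (⨅ i, f i) = ⨅ i, g (f i) := by
  refine le_antisymm (le_iInf fun i => hg (iInf_le f i)) ?_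
  obtain ⟨i, hi⟩ := ciInf_mem f
  rw [← hi]
  exact iInf_le _ i

def stepArr (q : ℕ) : ℕ → ℕ∞ := fun k => if k = 0 then 0 else q

theorem stepArr_mem_UAt (q : ℕ) : stepArr q ∈ UAt q := by
  refine ⟨⟨rfl, monotone_nat_of_le_succ fun n => ?_⟩, rfl⟩
  cases n <;> simp [stepArr]

theorem min_le_minPlus_stepArr (m : ℕ → ℕ → ℕ∞) (q j : ℕ) :
    min (m 0 j) (q : ℕ∞) ≤ minPlus m (stepArr q) j := by
  refine le_iInf fun i => ?_
  rcases i with _ | i <;> simp [stepArr]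

theorem cumulativeMatrix_updMat {m : ℕ → ℕ → ℕ∞} (hm : CumulativeMatrix m) {q d : ℕ}
    (h : min (m 0 1) (q : ℕ∞) ≤ d) : CumulativeMatrix (updMat q d m) := by
  refine ⟨fun i j hij => ?_, fun i j => ?_⟩
  · rcases i with _ | i
    · obtain rfl : j = 0 := by omega
      simpa [updMat, hm.1 1 1 le_rfl] using tsub_eq_zero_of_le h
    · exact hm.1 _ _ (by omega)
  · rcases i with _ | i
    · simp only [updMat, if_true]
      gcongr
      exacts [hm.2 0 _, hm.2 1 _]
    · exact hm.2 _ _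

theorem minPlus_liftArr_tsub (m : ℕ → ℕ → ℕ∞) {q d : ℕ} {x' : ℕ → ℕ∞} (hx' : x' 0 = 0)
    (j : ℕ) :
    minPlus m (liftArr q d x') (j + 1) - d = ⨅ i, (x' i + updMat q d m i j) := by
  have hsub : Monotone (· - (d : ℕ∞)) := fun _ _ h => tsub_le_tsub_right h _
  have hcancel (u v : ℕ∞) : u + d + v - d = u + v := by
    rw [add_right_comm]
    exact (ENat.addLECancellable_of_ne_top (ENat.natCast_ne_top d)).add_tsub_cancel_right
  rw [minPlus, ← inf_iInf_nat_succ, ← inf_iInf_nat_succ (fun i => liftArr q d x' (i + 1) + _),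
    ← inf_iInf_nat_succ (fun i => x' i + _), hsub.map_min, hsub.map_min,
    hsub.map_iInf_of_wellFoundedLT, ← inf_assoc, ← hsub.map_min]
  simp [liftArr, updMat, hx', hcancel]

theorem minPlus_update_general (m : ℕ → ℕ → ℕ∞) (hm : CumulativeMatrix m)
    (d : ℕ) (q : ℕ)
    (hpd : (⨆ x ∈ UAt q, minPlus m x 1) ≤ (d : ℕ∞)) :
    CumulativeMatrix (updMat q d m) ∧
    ∀ x' ∈ UUp (q - d), ∀ j : ℕ,
      minPlus m (liftArr q d x') (j + 1) - (d : ℕ∞) =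
        ⨅ i : ℕ, (x' i + updMat q d m i j) := by
  have hstep : min (m 0 1) (q : ℕ∞) ≤ d :=
    (min_le_minPlus_stepArr m q 1).trans <|
      (le_biSup (fun x => minPlus m x 1) (stepArr_mem_UAt q)).trans hpd
  exact ⟨cumulativeMatrix_updMat hm hstep, fun x' hx' j => minPlus_liftArr_tsub m hx'.1.1 j⟩

/-- Update invariance of min-plus services: if `ψ = ψ^M` and `q ≥ d ≥ p`, then
`Ṁ` is a cumulative matrix and the updated service is `ψ^Ṁ`. -/
theorem minPlus_update (m : ℕ → ℕ → ℕ∞) (hm : CumulativeMatrix m)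
    (a b d : ℕ) (q : ℕ) (hq : q = a + b)
    (hdq : d ≤ q)
    (hpd : (⨆ x ∈ UAt q, minPlus m x 1) ≤ (d : ℕ∞)) :
    CumulativeMatrix (updMat q d m) ∧
    ∀ x' ∈ UUp (q - d), ∀ j : ℕ,
      minPlus m (liftArr q d x') (j + 1) - (d : ℕ∞) =
        ⨅ i : ℕ, (x' i + updMat q d m i j) :=
  minPlus_update_general m hm d q hpd
end

section
/- In a dual-curve system the per-task deadlines are arrival-independent: for cumulative vectors u, v, backlog b, and q ≥ b, for every x ∈ U|q and every h with 1 ≤ h ≤ q, τ_h(ψ^{(u,v)}(x)) = τ_h(p) where p_j := min{u_j, q} for j ≥ 1 (p_0 := 0), and τ_h(y) := max{j ∈ ℕ∪{∞} | y_j < h}. -/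
/-- The dual-curve service `ψ^{(u,v)}_j(x) = min{u_j, min_{1≤i≤j}(x_i + v_{j−i})}`
for `j ≥ 1`, with `ψ^{(u,v)}_0(x) = 0`. -/
noncomputable def dualCurve (u v : ℕ → ℕ∞) (x : ℕ → ℕ∞) (j : ℕ) : ℕ∞ :=
  if j = 0 then 0
  else min (u j) (⨅ i ∈ Finset.Icc 1 j, (x i + v (j - i)))

/-- `τ_h(y)`: the last slot offset `j` with `y_j < h`. -/
noncomputable def tau (h : ℕ) (y : ℕ → ℕ∞) : ℕ∞ :=
  ⨆ j ∈ {j : ℕ | y j < (h : ℕ∞)}, (j : ℕ∞)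

/-- In a dual-curve system, per-task deadlines are arrival-independent:
for every `x ∈ U|q` and `1 ≤ h ≤ q`,
`τ_h(ψ^{(u,v)}(x)) = τ_h(p)` with `p_j = min{u_j, q}` for `j ≥ 1`, `p_0 = 0`. -/
theorem dualCurve_deadlines (u v : ℕ → ℕ∞) (hu : Cumulative u) (hv : Cumulative v)
    (b q : ℕ) (hbq : b ≤ q) :
    ∀ x ∈ UAt q, ∀ h : ℕ, 1 ≤ h → h ≤ q →
      tau h (dualCurve u v x) =
        tau h (fun j => if j = 0 then 0 else min (u j) (q : ℕ∞)) := by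
  rintro x ⟨⟨hx0, hxmono⟩, hx1⟩ h h1 hq
  unfold tau
  congr 1
  ext j
  simp only [Set.mem_setOf_eq, dualCurve]
  by_cases hj : j = 0
  · simp [hj]
  · simp only [if_neg hj]
    -- every term x i + v (j-i) ≥ q for i ∈ [1,j]
    have hinf : (q : ℕ∞) ≤ ⨅ i ∈ Finset.Icc 1 j, (x i + v (j - i)) := by
      refine le_iInf₂ fun i hi => ?_
      have h1i : 1 ≤ i := (Finset.mem_Icc.mp hi).1
      calc (q : ℕ∞) = x 1 := hx1.symm
        _ ≤ x i := hxmono h1i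
        _ ≤ x i + v (j - i) := le_self_add
    have hhq : (h : ℕ∞) ≤ (q : ℕ∞) := by exact_mod_cast hq
    have hiff : (u j ⊓ ⨅ i ∈ Finset.Icc 1 j, (x i + v (j - i)) < (h : ℕ∞)) ↔
        (u j ⊓ (q : ℕ∞) < (h : ℕ∞)) := by
      constructor
      · intro hlt
        rcases min_lt_iff.mp hlt with hu' | hi'
        · exact min_lt_iff.mpr (Or.inl hu')
        · exact absurd hi' (not_lt.mpr (le_trans hhq hinf))
      · intro hlt
        rcases min_lt_iff.mp hlt with hu' | hqlt
        · exact min_lt_iff.mpr (Or.inl hu')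
        · exact absurd hqlt (not_lt.mpr hhq)
    rw [hiff]
end
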